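/- Suppose m = m₀ identical p-values p₁ = ... = p_m with p₁ uniform on [0,1], and fix k₀ ∈ {1,...,m}. Then the plug-in adaptive linear step-up procedure using the quantile estimator G₂(p) = (1−p_{(k₀)})m/(m−k₀+1) at level α has FDR equal to α / (1 + α − (k₀−1)/m). -/

import Mathlib

open MeasureTheory

/-- `sortedVal x i`: the `i`-th smallest value of `x` (`1 ≤ i ≤ m`), `sortedVal x 0 = 0`. -/
noncomputable def sortedVal {m : ℕ} (x : Fin m → ℝ) (i : ℕ) : ℝ :=
  if i = 0 then 0
  else (Multiset.sort (Finset.univ.val.map x) (· ≤ ·)).getD (i - 1) 0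

/-- `stepUpIndex Δ x = max{0 ≤ i ≤ m : p_(i) ≤ Δ(i)}`. -/
noncomputable def stepUpIndex {m : ℕ} (Δ : ℕ → ℝ) (x : Fin m → ℝ) : ℕ :=
  ((Finset.range (m + 1)).filter (fun i => sortedVal x i ≤ Δ i)).sup id

/-- The step-up procedure with threshold collection `Δ`. -/
noncomputable def stepUp {m : ℕ} (Δ : ℕ → ℝ) (x : Fin m → ℝ) : Finset (Fin m) :=
  Finset.univ.filter (fun h => x h ≤ sortedVal x (stepUpIndex Δ x))

/-- The quantile estimator `G₂(p) = (1 - p_(k₀)) m / (m - k₀ + 1)`. -/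
noncomputable def quantEst {m : ℕ} (k₀ : ℕ) (x : Fin m → ℝ) : ℝ :=
  (1 - sortedVal x k₀) * m / ((m : ℝ) - k₀ + 1)

lemma sortedVal_const {m : ℕ} (p : ℝ) (i : ℕ) (h1 : 1 ≤ i) (h2 : i ≤ m) :
    sortedVal (fun _ : Fin m => p) i = p := by
  have hms : (Finset.univ.val.map (fun _ : Fin m => p)) = Multiset.replicate m p := by
    rw [Multiset.map_const']
    simp
  have hlist : Multiset.sort (Finset.univ.val.map (fun _ : Fin m => p)) (· ≤ ·)
      = List.replicate m p := by
    rw [← List.perm_replicate]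
    rw [← Multiset.coe_eq_coe, Multiset.sort_eq, hms, Multiset.coe_replicate]
  simp only [sortedVal, if_neg (Nat.one_le_iff_ne_zero.mp h1), hlist]
  rw [List.getD_eq_getElem _ _ (by simp [List.length_replicate]; omega)]
  simp

lemma sortedVal_zero {m : ℕ} (x : Fin m → ℝ) : sortedVal x 0 = 0 := by simp [sortedVal]

/-- Under maximal dependence (`m = m₀` identical uniform p-values), the plug-in
adaptive linear step-up procedure using the quantile estimator `G₂` has FDR
exactly `α / (1 + α - (k₀-1)/m)`. -/
theorem stmt11 {Ω : Type*} [MeasurableSpace Ω] (μ : Measure Ω) [IsProbabilityMeasure μ]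
    (m : ℕ) (hm : 1 ≤ m) (p₁ : Ω → ℝ) (hp₁ : Measurable p₁)
    (hunif : ∀ u ∈ Set.Icc (0 : ℝ) 1, μ {ω | p₁ ω ≤ u} = ENNReal.ofReal u)
    (α : ℝ) (hα : α ∈ Set.Ioo (0 : ℝ) 1)
    (k₀ : ℕ) (hk₀ : 1 ≤ k₀) (hk₀m : k₀ ≤ m) :
    ∫⁻ ω, ENNReal.ofReal
        ((((stepUp
              (fun i => α * i * quantEst k₀ (fun _ : Fin m => p₁ ω) / m)
              (fun _ : Fin m => p₁ ω) ∩ Finset.univ).card : ℝ))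
          / ((stepUp
              (fun i => α * i * quantEst k₀ (fun _ : Fin m => p₁ ω) / m)
              (fun _ : Fin m => p₁ ω)).card : ℝ)
          * (if 0 < (stepUp
              (fun i => α * i * quantEst k₀ (fun _ : Fin m => p₁ ω) / m)
              (fun _ : Fin m => p₁ ω)).card then 1 else 0)) ∂μ
      = ENNReal.ofReal (α / (1 + α - ((k₀ : ℝ) - 1) / m)) := by
  obtain ⟨hα0, hα1⟩ := hα
  have hm0 : (0:ℝ) < m := by exact_mod_cast hm
  have hk₀R : (1:ℝ) ≤ (k₀:ℝ) := by exact_mod_cast hk₀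
  have hk₀mR : (k₀:ℝ) ≤ (m:ℝ) := by exact_mod_cast hk₀m
  have hM : (0:ℝ) < (m:ℝ) - k₀ + 1 := by linarith
  set D : ℝ := (1+α)*m - k₀ + 1 with hD
  have hDpos : 0 < D := by nlinarith
  set c : ℝ := α * m / D with hc
  have hc0 : 0 < c := div_pos (by positivity) hDpos
  have hc1 : c ≤ 1 := by
    rw [div_le_one hDpos]; nlinarith
  have key : ∀ ω, ENNReal.ofReal
        ((((stepUp
              (fun i => α * i * quantEst k₀ (fun _ : Fin m => p₁ ω) / m)
              (fun _ : Fin m => p₁ ω) ∩ Finset.univ).card : ℝ))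
          / ((stepUp
              (fun i => α * i * quantEst k₀ (fun _ : Fin m => p₁ ω) / m)
              (fun _ : Fin m => p₁ ω)).card : ℝ)
          * (if 0 < (stepUp
              (fun i => α * i * quantEst k₀ (fun _ : Fin m => p₁ ω) / m)
              (fun _ : Fin m => p₁ ω)).card then 1 else 0))
      = Set.indicator {ω' | p₁ ω' ≤ c} (fun _ => (1:ENNReal)) ω := by
    intro ω
    set p : ℝ := p₁ ω with hp
    set x : Fin m → ℝ := fun _ : Fin m => p with hx
    set Δ : ℕ → ℝ := fun i => α * i * quantEst k₀ x / m with hΔdef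
    have hq : quantEst k₀ x = (1 - p) * m / ((m:ℝ) - k₀ + 1) := by
      unfold quantEst
      rw [sortedVal_const p k₀ hk₀ hk₀m]
    have himp : ∀ i : ℕ, 1 ≤ i → i ≤ m → p ≤ Δ i → p ≤ c := by
      intro i h1 h2 h
      have hiR : (i:ℝ) ≤ m := by exact_mod_cast h2
      have hi1 : (1:ℝ) ≤ (i:ℝ) := by exact_mod_cast h1
      have hΔi : Δ i = α * i * (1 - p) / ((m:ℝ) - k₀ + 1) := by
        rw [hΔdef]; simp only; rw [hq]; field_simp
      rw [hΔi, le_div_iff₀ hM] at h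
      rw [hc, le_div_iff₀ hDpos, hD]
      rcases le_or_gt p 1 with h1p | h1p
      · have hub : α * ↑i * (1 - p) ≤ α * ↑m * (1 - p) :=
          mul_le_mul_of_nonneg_right
            (mul_le_mul_of_nonneg_left hiR hα0.le) (by linarith)
        nlinarith
      · have hneg : α * ↑i * (1 - p) < 0 :=
          mul_neg_of_pos_of_neg (by positivity) (by linarith)
        nlinarith [mul_pos (lt_trans zero_lt_one h1p) hM]
    have hiffm : p ≤ Δ m ↔ p ≤ c := by
      constructor
      · exact himp m hm le_rfl
      · intro hpc
        have hΔm : Δ m = α * m * (1 - p) / ((m:ℝ) - k₀ + 1) := by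
          rw [hΔdef]; simp only; rw [hq]; field_simp
        rw [hΔm, le_div_iff₀ hM]
        rw [hc, le_div_iff₀ hDpos, hD] at hpc
        nlinarith
    by_cases hpc : p ≤ c
    · have hidx : stepUpIndex Δ x = m := by
        unfold stepUpIndex
        apply le_antisymm
        · apply Finset.sup_le
          intro i hi
          simp only [Finset.mem_filter, Finset.mem_range] at hi
          simpa using Nat.lt_succ_iff.mp hi.1
        · have hmem : m ∈ (Finset.range (m + 1)).filter (fun i => sortedVal x i ≤ Δ i) := by
            simp only [Finset.mem_filter, Finset.mem_range]
            refine ⟨Nat.lt_succ_self m, ?_⟩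
            rw [sortedVal_const p m hm le_rfl]
            exact hiffm.mpr hpc
          exact Finset.le_sup (f := id) hmem
      have hsu : stepUp Δ x = Finset.univ := by
        unfold stepUp
        rw [hidx, sortedVal_const p m hm le_rfl]
        exact Finset.filter_true_of_mem (fun h _ => le_rfl)
      rw [hsu]
      rw [Set.indicator_of_mem (by exact hpc : ω ∈ {ω' | p₁ ω' ≤ c})]
      rw [Finset.inter_self, Finset.card_univ, Fintype.card_fin]
      rw [if_pos (by omega)]
      rw [div_self (by exact_mod_cast hm0.ne'), mul_one, ENNReal.ofReal_one]
    · have hidx : stepUpIndex Δ x = 0 := by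
        unfold stepUpIndex
        refine Nat.le_zero.mp (Finset.sup_le ?_)
        intro i hi
        simp only [Finset.mem_filter, Finset.mem_range] at hi
        rcases Nat.eq_zero_or_pos i with h0 | h1
        · simp [h0]
        · exfalso
          apply hpc
          apply himp i h1 (Nat.lt_succ_iff.mp hi.1)
          rw [← sortedVal_const p i h1 (Nat.lt_succ_iff.mp hi.1)]
          exact hi.2
      have hsu : stepUp Δ x = ∅ := by
        unfold stepUp
        rw [hidx, sortedVal_zero]
        apply Finset.filter_false_of_mem
        intro h _
        simp only [hx]
        push_neg at hpc
        linarith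
      rw [hsu]
      rw [Set.indicator_of_notMem (by exact hpc : ω ∉ {ω' | p₁ ω' ≤ c})]
      simp
  rw [lintegral_congr key]
  have hms : MeasurableSet {ω' | p₁ ω' ≤ c} := by
    exact hp₁ measurableSet_Iic
  rw [lintegral_indicator hms, setLIntegral_one]
  rw [hunif c ⟨hc0.le, hc1⟩]
  congr 1
  have hden : 1 + α - ((k₀:ℝ) - 1) / m = D / m := by
    rw [hD]; field_simp; ring
  rw [hden, hc, div_div_eq_mul_div]
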